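/- arXiv:math/0305181 — 3 statements merged into one kernel-verified Lean document; each statement's English description precedes it below -/
import Mathlib

section
/- Let φ ∈ ℂ[z] be a polynomial of degree d ≥ 2 with filled Julia set F ⊂ ℂ, let λ be a logarithmic distance function for F, and let {S_n} be a sequence of finite subsets of ℂ that is λ-taut. Then {S_n} is F-tight. -/
open Filter

/-- `log⁺ t = log (max t 1)`. -/
noncomputable def logPlus (t : ℝ) : ℝ := Real.log (max t 1)

/-- The `n`-th iterate of the polynomial map `z ↦ φ(z)`. -/
noncomputable def polyIter {L : Type*} [CommRing L] (φ : Polynomial L) (n : ℕ) : L → L :=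
  (fun w => Polynomial.eval w φ)^[n]

/-- The filled Julia set of the polynomial `φ` over a normed field. -/
noncomputable def filledJulia {L : Type*} [NormedField L] (φ : Polynomial L) : Set L :=
  {z : L | ¬ Tendsto (fun n : ℕ => ‖polyIter φ n z‖) atTop atTop}

/-- `λ` is a logarithmic distance function for `F ⊆ L`: continuous, vanishing exactly
on `F`, positive off `F`, and within bounded distance of `log⁺‖·‖`. -/
structure IsLogDistFun {L : Type*} [NormedField L] (F : Set L) (lam : L → ℝ) : Prop where
  continuous : Continuous lam
  eq_zero : ∀ z ∈ F, lam z = 0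
  pos : ∀ z ∉ F, 0 < lam z
  bounded : ∃ C : ℝ, ∀ z : L, |lam z - logPlus ‖z‖| ≤ C

/-- A sequence of finite sets is `λ`-taut if the average of `λ` over `S n` tends to `0`. -/
def IsTaut {L : Type*} (S : ℕ → Finset L) (lam : L → ℝ) : Prop :=
  Tendsto (fun n => ((S n).card : ℝ)⁻¹ * ∑ z ∈ S n, lam z) atTop (nhds 0)

/-- A sequence of finite sets is `F`-tight if for all `δ, ε > 0`, eventually at least a
`(1-ε)`-fraction of the points of `S n` lie within distance `δ` of `F`. -/
def IsTight {L : Type*} [NormedField L] (S : ℕ → Finset L) (F : Set L) : Prop :=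
  ∀ δ > (0 : ℝ), ∀ ε > (0 : ℝ), ∃ N : ℕ, ∀ n ≥ N,
    (1 - ε) * ((S n).card : ℝ) ≤
      (((S n : Set L)) ∩ {z : L | Metric.infDist z F ≤ δ}).ncard

open Finset

/-!
Since `λ ≥ log⁺‖z‖ - C`, `λ` tends to infinity at infinity; being continuous and positive off
`F`, it is therefore bounded below by some `m > 0` on the closed set of points at distance
`≥ δ` from `F`. If the average of `λ` over `S n` is below `ε m`, Markov's inequality leaves
fewer than `ε · #S n` points of `S n` at distance `≥ δ` from `F`.
-/

lemma tendsto_logPlus_atTop : Tendsto logPlus atTop atTop :=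
  Real.tendsto_log_atTop.comp <|
    tendsto_atTop_mono (fun t : ℝ => le_max_left t 1) tendsto_id

lemma exists_pos_forall_le_of_tendsto_cocompact {X : Type*} [TopologicalSpace X]
    {f : X → ℝ} {K : Set X} (hf : Continuous f) (hK : IsClosed K) (hpos : ∀ x ∈ K, 0 < f x)
    (hinf : Tendsto f (cocompact X) atTop) : ∃ m > 0, ∀ x ∈ K, m ≤ f x := by
  obtain ⟨t, ht, hft⟩ := mem_cocompact.1 (hinf.eventually_ge_atTop 1)
  obtain ⟨m, hm, hmt⟩ := (ht.inter_left hK).exists_forall_le' hf.continuousOn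
    fun x hx => hpos x hx.1
  refine ⟨min m 1, lt_min hm one_pos, fun x hx => ?_⟩
  by_cases hxt : x ∈ t
  · exact (min_le_left _ _).trans (hmt x ⟨hx, hxt⟩)
  · exact (min_le_right _ _).trans (hft hxt)

lemma Finset.one_sub_mul_card_le_card_filter {α : Type*} {s : Finset α} {f : α → ℝ}
    {p : α → Prop} [DecidablePred p] {m ε : ℝ} (hm : 0 < m) (hf : ∀ x ∈ s, 0 ≤ f x)
    (hp : ∀ x ∈ s, ¬ p x → m ≤ f x) (havg : (#s : ℝ)⁻¹ * ∑ x ∈ s, f x ≤ ε * m) :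
    (1 - ε) * #s ≤ #(s.filter p) := by
  rcases s.eq_empty_or_nonempty with rfl | hs
  · simp
  have hcard : (0 : ℝ) < #s := by exact_mod_cast hs.card_pos
  have hsum : ∑ x ∈ s, f x ≤ ε * m * #s := by
    rwa [inv_mul_le_iff₀ hcard, mul_comm] at havg
  have hbad : m * #(s.filter (¬ p ·)) ≤ ∑ x ∈ s, f x :=
    calc m * #(s.filter (¬ p ·)) ≤ ∑ x ∈ s.filter (¬ p ·), f x := by
          rw [mul_comm, ← nsmul_eq_mul]
          exact card_nsmul_le_sum _ _ _ fun x hx =>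
            hp x (mem_filter.1 hx).1 (mem_filter.1 hx).2
      _ ≤ ∑ x ∈ s, f x := sum_le_sum_of_subset_of_nonneg (filter_subset _ _)
          fun x hx _ => hf x hx
  have hsplit : (#(s.filter p) : ℝ) + #(s.filter (¬ p ·)) = #s := by
    exact_mod_cast card_filter_add_card_filter_not p
  nlinarith

namespace IsLogDistFun

variable {L : Type*} [NormedField L] {F : Set L} {lam : L → ℝ}

lemma nonneg (hlam : IsLogDistFun F lam) (z : L) : 0 ≤ lam z := by
  by_cases hz : z ∈ F
  · exact (hlam.eq_zero z hz).ge
  · exact (hlam.pos z hz).le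

lemma tendsto_cocompact_atTop [ProperSpace L] (hlam : IsLogDistFun F lam) :
    Tendsto lam (cocompact L) atTop := by
  obtain ⟨C, hC⟩ := hlam.bounded
  refine tendsto_atTop_mono (fun z => ?_) <| tendsto_atTop_add_const_right _ (-C) <|
    tendsto_logPlus_atTop.comp tendsto_norm_cocompact_atTop
  have := (abs_le.1 (hC z)).1
  simp only [Function.comp_apply]
  linarith

lemma exists_pos_le_of_le_infDist [ProperSpace L] (hlam : IsLogDistFun F lam) {δ : ℝ}
    (hδ : 0 < δ) : ∃ m > 0, ∀ z, δ ≤ Metric.infDist z F → m ≤ lam z := by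
  have hnotF : ∀ z, δ ≤ Metric.infDist z F → z ∉ F := fun z hz hzF => by
    rw [Metric.infDist_zero_of_mem hzF] at hz
    linarith
  exact exists_pos_forall_le_of_tendsto_cocompact hlam.continuous
    (isClosed_le continuous_const (Metric.continuous_infDist_pt F))
    (fun z hz => hlam.pos z (hnotF z hz)) hlam.tendsto_cocompact_atTop

lemma isTight_of_isTaut [ProperSpace L] (hlam : IsLogDistFun F lam) {S : ℕ → Finset L}
    (htaut : IsTaut S lam) : IsTight S F := by
  classical
  intro δ hδ ε hε
  obtain ⟨m, hm, hfar⟩ := hlam.exists_pos_le_of_le_infDist hδ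
  obtain ⟨N, hN⟩ := eventually_atTop.1 (htaut.eventually_le_const (mul_pos hε hm))
  refine ⟨N, fun n hn => ?_⟩
  have hset : (S n : Set L) ∩ {z | Metric.infDist z F ≤ δ} =
      ((S n).filter (Metric.infDist · F ≤ δ) : Finset L) := by
    ext z
    simp
  rw [hset, Set.ncard_coe_finset]
  exact one_sub_mul_card_le_card_filter hm (fun z _ => hlam.nonneg z)
    (fun z _ hz => hfar z (le_of_not_ge hz)) (hN n hn)

end IsLogDistFun

theorem stmt12_general (φ : Polynomial ℂ)
    (lam : ℂ → ℝ) (hlam : IsLogDistFun (filledJulia φ) lam)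
    (S : ℕ → Finset ℂ) (htaut : IsTaut S lam) :
    IsTight S (filledJulia φ) :=
  hlam.isTight_of_isTaut htaut

/-- If `φ ∈ ℂ[z]` has degree `d ≥ 2` with filled Julia set `F`, `λ` is a
logarithmic distance function for `F`, and `{S_n}` is a `λ`-taut sequence of finite subsets
of `ℂ`, then `{S_n}` is `F`-tight. -/
theorem stmt12 (φ : Polynomial ℂ) (hd : 2 ≤ φ.natDegree)
    (lam : ℂ → ℝ) (hlam : IsLogDistFun (filledJulia φ) lam)
    (S : ℕ → Finset ℂ) (htaut : IsTaut S lam) :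
    IsTight S (filledJulia φ) :=
  stmt12_general φ lam hlam S htaut
end

section
/- Let L be an algebraically closed field complete with respect to a nontrivial non-archimedean absolute value |·|, and let φ ∈ L[z] be a polynomial of degree d ≥ 2 with leading coefficient a_d whose filled Julia set F is compact. Choose R > 0 such that |z| > R implies |φ(z)| = |a_d|·|z|^d > R, set F_0 := {z ∈ L : |z| ≤ R} and F_n := φ^{−n}(F_0) for n ≥ 1. Then for every δ in the value group |L^×| there exists a positive integer N such that F_n ⊆ F_δ := {z ∈ L : dist(z,F) ≤ δ} for all n ≥ N. -/
open Filter

section AuxStmt13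

open Polynomial


variable {L : Type*} [NormedField L]

lemma ultra_multiset_sum_le (hna : ∀ x y : L, ‖x + y‖ ≤ max ‖x‖ ‖y‖)
    {B : ℝ} (hB : 0 ≤ B) (m : Multiset L) (h : ∀ x ∈ m, ‖x‖ ≤ B) : ‖m.sum‖ ≤ B := by
  induction m using Multiset.induction with
  | empty => simpa using hB
  | cons a s ih =>
    rw [Multiset.sum_cons]
    exact le_trans (hna _ _)
      (max_le (h a (Multiset.mem_cons_self a s)) (ih fun x hx => h x (Multiset.mem_cons_of_mem hx)))

lemma ultra_multiset_sum_lt (hna : ∀ x y : L, ‖x + y‖ ≤ max ‖x‖ ‖y‖)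
    {B : ℝ} (hB : 0 < B) (m : Multiset L) (h : ∀ x ∈ m, ‖x‖ < B) : ‖m.sum‖ < B := by
  induction m using Multiset.induction with
  | empty => simpa using hB
  | cons a s ih =>
    rw [Multiset.sum_cons]
    exact lt_of_le_of_lt (hna _ _)
      (max_lt (h a (Multiset.mem_cons_self a s)) (ih fun x hx => h x (Multiset.mem_cons_of_mem hx)))

lemma ultra_finset_sum_le (hna : ∀ x y : L, ‖x + y‖ ≤ max ‖x‖ ‖y‖)
    {B : ℝ} (hB : 0 ≤ B) {ι : Type*} (s : Finset ι) (f : ι → L) (h : ∀ i ∈ s, ‖f i‖ ≤ B) :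
    ‖∑ i ∈ s, f i‖ ≤ B := by
  classical
  induction s using Finset.induction with
  | empty => simpa using hB
  | insert a s hi ih =>
    rw [Finset.sum_insert hi]
    exact le_trans (hna _ _)
      (max_le (h _ (Finset.mem_insert_self _ _)) (ih fun i hx => h i (Finset.mem_insert_of_mem hx)))

lemma pow_lt_multiset_prod {r : ℝ} (hr : 0 < r) (m : Multiset ℝ) (hm : m ≠ 0)
    (h : ∀ x ∈ m, r < x) : r ^ Multiset.card m < m.prod := by
  induction m using Multiset.induction with
  | empty => exact absurd rfl hm
  | cons a s ih =>
    rcases eq_or_ne s 0 with rfl | hs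
    · simpa using h a (Multiset.mem_cons_self a 0)
    · have ha := h a (Multiset.mem_cons_self a s)
      have hs' := ih hs fun x hx => h x (Multiset.mem_cons_of_mem hx)
      rw [Multiset.card_cons, Multiset.prod_cons, pow_succ, mul_comm (r ^ Multiset.card s) r]
      exact mul_lt_mul ha hs'.le (pow_pos hr _) (le_of_lt (lt_of_le_of_lt hr.le ha))

lemma norm_multiset_prod' (m : Multiset L) : ‖m.prod‖ = (m.map fun x => ‖x‖).prod := by
  induction m using Multiset.induction with
  | empty => simp
  | cons a s ih => simp [ih]

lemma root_in_ball [IsAlgClosed L] (hna : ∀ x y : L, ‖x + y‖ ≤ max ‖x‖ ‖y‖)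
    (Q : Polynomial L) (k : ℕ) (hk1 : 1 ≤ k) (hkD : k ≤ Q.natDegree)
    (r : ℝ) (hr : 0 ≤ r) (hle : ‖Q.coeff 0‖ ≤ ‖Q.coeff k‖ * r ^ k) :
    ∃ x : L, Q.eval x = 0 ∧ ‖x‖ ≤ r := by
  classical
  by_cases h0 : Q.coeff 0 = 0
  · exact ⟨0, by rw [← coeff_zero_eq_eval_zero, h0], by simpa using hr⟩
  have hc0 : 0 < ‖Q.coeff 0‖ := norm_pos_iff.mpr h0
  have hrpos : 0 < r := by
    rcases hr.lt_or_eq with h | h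
    · exact h
    · exfalso
      rw [← h, zero_pow (by omega), mul_zero] at hle
      exact absurd (le_antisymm hle (norm_nonneg _)) (ne_of_gt hc0)
  have hQne : Q ≠ 0 := fun h => by simp [h] at h0
  by_contra hno
  push_neg at hno
  have hroots : ∀ w ∈ Q.roots, r < ‖w‖ := fun w hw => hno w (mem_roots'.mp hw).2
  set n := Q.natDegree with hn
  have hsp : Q.Splits := IsAlgClosed.splits Q
  have hcard : Multiset.card Q.roots = n := Polynomial.splits_iff_card_roots.mp hsp
  set P : ℝ := (Q.roots.map fun x => ‖x‖).prod with hPdef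
  have hPpos : 0 < P :=
    Multiset.prod_pos (by
      intro a ha
      rw [Multiset.mem_map] at ha
      obtain ⟨w, hw, rfl⟩ := ha
      exact lt_trans hrpos (hroots w hw))
  have hQeq := hsp.eq_prod_roots
  have hlc : Q.leadingCoeff ≠ 0 := leadingCoeff_ne_zero.mpr hQne
  have hlcpos : 0 < ‖Q.leadingCoeff‖ := norm_pos_iff.mpr hlc
  have hc0eq : ‖Q.coeff 0‖ = ‖Q.leadingCoeff‖ * P := by
    conv_lhs => rw [coeff_zero_eq_eval_zero, hQeq]
    rw [eval_mul, eval_C, norm_mul, eval_multiset_prod, Multiset.map_map,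
      norm_multiset_prod', Multiset.map_map]
    congr 1
    rw [hPdef]
    exact congrArg Multiset.prod (Multiset.map_congr rfl (fun a _ => by
      simp [Function.comp_apply, eval_sub, eval_X, eval_C, zero_sub, norm_neg]))
  have hck : ‖Q.coeff k‖ = ‖Q.leadingCoeff‖ * ‖Q.roots.esymm (n - k)‖ := by
    conv_lhs => rw [hQeq]
    rw [coeff_C_mul, norm_mul]
    congr 1
    rw [Multiset.prod_X_sub_C_coeff _ (by rw [hcard]; exact hkD), hcard, norm_mul, norm_pow,
      norm_neg, norm_one, one_pow, one_mul]
  have hesymm : ‖Q.roots.esymm (n - k)‖ < P / r ^ k := by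
    apply ultra_multiset_sum_lt hna (div_pos hPpos (pow_pos hrpos k))
    intro x hx
    rw [Multiset.mem_map] at hx
    obtain ⟨u, hu, rfl⟩ := hx
    rw [Multiset.mem_powersetCard] at hu
    obtain ⟨hul, huc⟩ := hu
    have hsplit : u + (Q.roots - u) = Q.roots := add_tsub_cancel_of_le hul
    have hcardc : Multiset.card (Q.roots - u) = k := by
      have := congrArg Multiset.card hsplit
      rw [Multiset.card_add, huc, hcard] at this
      omega
    have hcomp : r ^ k < ((Q.roots - u).map fun x => ‖x‖).prod := by
      have hne : ((Q.roots - u).map fun x => ‖x‖) ≠ 0 :=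
        Multiset.card_pos.mp (by rw [Multiset.card_map, hcardc]; omega)
      have := pow_lt_multiset_prod hrpos _ hne (by
        intro x hx
        rw [Multiset.mem_map] at hx
        obtain ⟨w, hw, rfl⟩ := hx
        exact hroots w (Multiset.mem_of_le tsub_le_self hw))
      rwa [Multiset.card_map, hcardc] at this
    have hupos : 0 < (u.map fun x => ‖x‖).prod :=
      Multiset.prod_pos (by
        intro a ha
        rw [Multiset.mem_map] at ha
        obtain ⟨w, hw, rfl⟩ := ha
        exact lt_trans hrpos (hroots w (Multiset.mem_of_le hul hw)))
    have hPeq : P = (u.map fun x => ‖x‖).prod * ((Q.roots - u).map fun x => ‖x‖).prod := by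
      rw [hPdef, ← Multiset.prod_add, ← Multiset.map_add, hsplit]
    rw [norm_multiset_prod', lt_div_iff₀ (pow_pos hrpos k), hPeq]
    exact mul_lt_mul_of_pos_left hcomp hupos
  have : ‖Q.coeff 0‖ < ‖Q.coeff 0‖ := by
    calc ‖Q.coeff 0‖ ≤ ‖Q.coeff k‖ * r ^ k := hle
      _ = ‖Q.leadingCoeff‖ * ‖Q.roots.esymm (n - k)‖ * r ^ k := by rw [hck]
      _ < ‖Q.leadingCoeff‖ * (P / r ^ k) * r ^ k := by
          apply mul_lt_mul_of_pos_right _ (pow_pos hrpos k)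
          exact mul_lt_mul_of_pos_left hesymm hlcpos
      _ = ‖Q.leadingCoeff‖ * P := by field_simp
      _ = ‖Q.coeff 0‖ := hc0eq.symm
  exact lt_irrefl _ this

lemma eval_ball_bound (hna : ∀ x y : L, ‖x + y‖ ≤ max ‖x‖ ‖y‖)
    (ψ : Polynomial L) (z y : L) (r t : ℝ) (ht : 0 ≤ t) (hy : ‖y - z‖ ≤ r)
    (hc : ∀ k, 1 ≤ k → k ≤ ψ.natDegree → ‖(taylor z ψ).coeff k‖ * r ^ k ≤ t) :
    ‖ψ.eval y‖ ≤ max ‖ψ.eval z‖ t := by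
  have hev : ψ.eval y = (taylor z ψ).eval (y - z) := (taylor_eval_sub z ψ y).symm
  rw [hev, eval_eq_sum_range]
  apply ultra_finset_sum_le hna (le_max_of_le_left (norm_nonneg _))
  intro i hi
  rw [Finset.mem_range, natDegree_taylor] at hi
  rcases Nat.eq_zero_or_pos i with rfl | hipos
  · rw [pow_zero, mul_one, taylor_coeff_zero]
    exact le_max_left _ _
  · have h1 : ‖(taylor z ψ).coeff i * (y - z) ^ i‖ ≤ ‖(taylor z ψ).coeff i‖ * r ^ i := by
      rw [norm_mul, norm_pow]
      exact mul_le_mul_of_nonneg_left (pow_le_pow_left₀ (norm_nonneg _) hy i) (norm_nonneg _)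
    exact le_trans (le_trans h1 (hc i hipos (by omega))) (le_max_right _ _)

lemma main_dichotomy [IsAlgClosed L] (hna : ∀ x y : L, ‖x + y‖ ≤ max ‖x‖ ‖y‖)
    (P : Polynomial L) (hP : 1 ≤ P.natDegree) (z₀ : L)
    (R δ : ℝ) (hR : 0 < R) (hδ : 0 < δ) (z : L) (hz : ‖P.eval z‖ ≤ R) :
    (∃ w : L, P.eval w = z₀ ∧ ‖z - w‖ ≤ δ) ∨
    (∃ w : L, P.eval w = z₀ ∧ ∀ y : L, ‖y - w‖ ≤ δ → ‖P.eval y‖ ≤ max R ‖z₀‖) := by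
  classical
  set c : ℕ → L := fun k => (taylor z P).coeff k with hcdef
  set t : ℝ := ‖z₀ - P.eval z‖ with htdef
  set Q : Polynomial L := taylor z P - C z₀ with hQdef
  have hQk : ∀ k, 1 ≤ k → Q.coeff k = c k := by
    intro k hk
    have hk0 : k ≠ 0 := by omega
    simp [hQdef, hcdef, coeff_sub, coeff_C, hk0]
  have hQ0 : ‖Q.coeff 0‖ = t := by
    simp [hQdef, coeff_sub, coeff_C, taylor_coeff_zero, htdef, norm_sub_rev]
  have hQdeg : Q.natDegree = P.natDegree := by
    rw [hQdef, natDegree_sub_C, natDegree_taylor]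
  have hroot : ∀ x : L, Q.eval x = 0 → P.eval (x + z) = z₀ := by
    intro x hx
    rw [hQdef, eval_sub, eval_C, sub_eq_zero] at hx
    rw [← taylor_eval z P x]
    exact hx
  have hT0 : taylor z P ≠ 0 := by
    intro h
    have h2 := natDegree_taylor P z
    rw [h] at h2
    simp only [natDegree_zero] at h2
    omega
  have hcD : c P.natDegree ≠ 0 := by
    have h2 := mt leadingCoeff_eq_zero.mp hT0
    rwa [leadingCoeff, natDegree_taylor] at h2
  set S := (Finset.Icc 1 P.natDegree).filter (fun k => c k ≠ 0) with hSdef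
  have hDS : P.natDegree ∈ S :=
    Finset.mem_filter.mpr ⟨Finset.mem_Icc.mpr ⟨hP, le_refl _⟩, hcD⟩
  have hSne : S.Nonempty := ⟨P.natDegree, hDS⟩
  have hSmem : ∀ k ∈ S, 1 ≤ k ∧ k ≤ P.natDegree ∧ c k ≠ 0 := by
    intro k hk
    obtain ⟨h1, h2⟩ := Finset.mem_filter.mp hk
    obtain ⟨h3, h4⟩ := Finset.mem_Icc.mp h1
    exact ⟨h3, h4, h2⟩
  by_cases hcase : ∃ k ∈ S, t ≤ ‖c k‖ * δ ^ k
  · obtain ⟨k, hkS, hk⟩ := hcase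
    obtain ⟨hk1, hkD, -⟩ := hSmem k hkS
    obtain ⟨x, hx0, hxr⟩ := root_in_ball hna Q k hk1 (by rw [hQdeg]; exact hkD) δ hδ.le
      (by rw [hQ0, hQk k hk1]; exact hk)
    refine Or.inl ⟨x + z, hroot x hx0, ?_⟩
    have hzz : z - (x + z) = -x := by ring
    rw [hzz, norm_neg]
    exact hxr
  · push_neg at hcase
    have htpos : 0 < t :=
      lt_of_le_of_lt (mul_nonneg (norm_nonneg _) (pow_nonneg hδ.le _)) (hcase _ hDS)
    set g : ℕ → ℝ := fun k => (t / ‖c k‖) ^ ((k : ℝ))⁻¹ with hgdef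
    set r : ℝ := S.inf' hSne g with hrdef
    have hgk : ∀ k ∈ S, δ < g k ∧ (g k) ^ k = t / ‖c k‖ := by
      intro k hkS
      obtain ⟨hk1, hkD, hck0⟩ := hSmem k hkS
      have hck : 0 < ‖c k‖ := norm_pos_iff.mpr hck0
      have hdiv : 0 < t / ‖c k‖ := div_pos htpos hck
      have hkne : (k : ℝ) ≠ 0 := Nat.cast_ne_zero.mpr (by omega)
      constructor
      · have h1 : δ ^ k < t / ‖c k‖ := (lt_div_iff₀ hck).mpr (by rw [mul_comm]; exact hcase k hkS)
        have h2 : δ ^ (k : ℝ) < t / ‖c k‖ := by rwa [Real.rpow_natCast]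
        have h3 := Real.rpow_lt_rpow (by positivity) h2 (by positivity : (0:ℝ) < ((k:ℝ))⁻¹)
        rwa [← Real.rpow_mul hδ.le, mul_inv_cancel₀ hkne, Real.rpow_one] at h3
      · rw [hgdef]
        rw [← Real.rpow_natCast ((t / ‖c k‖) ^ ((k : ℝ))⁻¹) k, ← Real.rpow_mul hdiv.le,
          inv_mul_cancel₀ hkne, Real.rpow_one]
    have hδr : δ < r := by
      rw [hrdef, Finset.lt_inf'_iff]
      exact fun k hk => (hgk k hk).1
    have hrpos : 0 < r := lt_trans hδ hδr
    have hrk : ∀ k ∈ S, ‖c k‖ * r ^ k ≤ t := by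
      intro k hkS
      obtain ⟨hk1, hkD, hck0⟩ := hSmem k hkS
      have hck : 0 < ‖c k‖ := norm_pos_iff.mpr hck0
      have h1 : r ≤ g k := Finset.inf'_le g hkS
      have h2 : r ^ k ≤ (g k) ^ k := pow_le_pow_left₀ hrpos.le h1 k
      rw [(hgk k hkS).2] at h2
      calc ‖c k‖ * r ^ k ≤ ‖c k‖ * (t / ‖c k‖) := mul_le_mul_of_nonneg_left h2 hck.le
        _ = t := by field_simp
    obtain ⟨k₀, hk₀S, hk₀⟩ := Finset.exists_mem_eq_inf' hSne g
    obtain ⟨hk01, hk0D, hck00⟩ := hSmem k₀ hk₀S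
    have hck0 : 0 < ‖c k₀‖ := norm_pos_iff.mpr hck00
    have heq : ‖c k₀‖ * r ^ k₀ = t := by
      have hr0 : r = g k₀ := hk₀
      rw [hr0, (hgk k₀ hk₀S).2]
      field_simp
    obtain ⟨x, hx0, hxr⟩ := root_in_ball hna Q k₀ hk01 (by rw [hQdeg]; exact hk0D) r hrpos.le
      (by rw [hQ0, hQk k₀ hk01, heq])
    refine Or.inr ⟨x + z, hroot x hx0, ?_⟩
    intro y hy
    have hyz : ‖y - z‖ ≤ r := by
      have h1 : y - z = (y - (x + z)) + x := by ring
      rw [h1]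
      exact le_trans (hna _ _) (max_le (le_trans hy hδr.le) hxr)
    have hbd := eval_ball_bound hna P z y r t htpos.le hyz (by
      intro k hk1 hkD
      by_cases hkS : k ∈ S
      · exact hrk k hkS
      · have hck : c k = 0 := by
          by_contra hcc
          exact hkS (Finset.mem_filter.mpr ⟨Finset.mem_Icc.mpr ⟨hk1, hkD⟩, hcc⟩)
        have : (taylor z P).coeff k = c k := rfl
        rw [this, hck]
        simp [htpos.le])
    have htle : t ≤ max R ‖z₀‖ := by
      rw [htdef, sub_eq_add_neg]
      refine le_trans (hna _ _) ?_
      rw [norm_neg]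
      exact max_le (le_max_right _ _) (le_trans hz (le_max_left _ _))
    exact le_trans hbd (max_le (le_trans hz (le_max_left _ _)) htle)

lemma ultra_norm_sub (hna : ∀ x y : L, ‖x + y‖ ≤ max ‖x‖ ‖y‖) {s t : L}
    (h : ‖t‖ < ‖s‖) : ‖s - t‖ = ‖s‖ := by
  apply le_antisymm
  · rw [sub_eq_add_neg]
    exact le_trans (hna _ _) (by rw [norm_neg]; exact max_le le_rfl h.le)
  · by_contra hlt
    push_neg at hlt
    have h2 := hna (s - t) t
    rw [sub_add_cancel] at h2
    rcases max_cases ‖s - t‖ ‖t‖ with ⟨he, -⟩ | ⟨he, -⟩ <;> rw [he] at h2 <;> linarith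


end AuxStmt13

open Polynomial in
/-- Let `L` be an algebraically closed field complete with respect to a
nontrivial non-archimedean absolute value, and `φ ∈ L[z]` of degree `d ≥ 2` with leading
coefficient `a_d` and compact filled Julia set `F`.  Choose `R > 0` with
`‖z‖ > R → ‖φ(z)‖ = ‖a_d‖·‖z‖^d > R`, and set `F_n = φ^{-n}(F_0)` with
`F_0 = {‖z‖ ≤ R}`.  Then for every `δ` in the value group of `L` there is `N ≥ 1` with
`F_n ⊆ F_δ = {z : dist(z,F) ≤ δ}` for all `n ≥ N`. -/
theorem stmt13 {L : Type*} [NormedField L] [IsAlgClosed L] [CompleteSpace L]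
    (hnontriv : ∃ x : L, 1 < ‖x‖)
    (hna : ∀ x y : L, ‖x + y‖ ≤ max ‖x‖ ‖y‖)
    (φ : Polynomial L) (hd : 2 ≤ φ.natDegree)
    (hcompact : IsCompact (filledJulia φ))
    (R : ℝ) (hR : 0 < R)
    (hesc : ∀ z : L, R < ‖z‖ →
      ‖Polynomial.eval z φ‖ = ‖φ.leadingCoeff‖ * ‖z‖ ^ φ.natDegree ∧
        R < ‖Polynomial.eval z φ‖)
    (δ : ℝ) (hδ : ∃ x : L, x ≠ 0 ∧ ‖x‖ = δ) :
    ∃ N : ℕ, 0 < N ∧ ∀ n ≥ N,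
      (polyIter φ n) ⁻¹' {z : L | ‖z‖ ≤ R} ⊆
        {z : L | Metric.infDist z (filledJulia φ) ≤ δ} := by
  classical
  obtain ⟨x₀, hx₀ne, hx₀n⟩ := hδ
  have hδpos : 0 < δ := by rw [← hx₀n]; exact norm_pos_iff.mpr hx₀ne
  -- the iterated polynomial
  set ψ : ℕ → Polynomial L := fun n => (fun p : Polynomial L => p.comp φ)^[n] Polynomial.X
    with hψdef
  have hψs : ∀ n, ψ (n + 1) = (ψ n).comp φ := fun n => Function.iterate_succ_apply' _ n _
  have hψeval : ∀ n (z : L), (ψ n).eval z = polyIter φ n z := by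
    intro n
    induction n with
    | zero => intro z; simp [hψdef, polyIter]
    | succ n ih =>
      intro z
      rw [hψs n, Polynomial.eval_comp, ih]
      simp [polyIter, Function.iterate_succ_apply]
  have hψdeg : ∀ n, 1 ≤ (ψ n).natDegree := by
    intro n
    induction n with
    | zero => simp [hψdef]
    | succ n ih =>
      rw [hψs n, Polynomial.natDegree_comp]
      exact Nat.mul_pos ih (by omega)
  -- a fixed point of φ
  have hpne : φ - Polynomial.X ≠ 0 := by
    intro h
    have h2 : (φ - Polynomial.X).natDegree = φ.natDegree :=
      Polynomial.natDegree_sub_eq_left_of_natDegree_lt (by rw [Polynomial.natDegree_X]; omega)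
    rw [h, Polynomial.natDegree_zero] at h2
    omega
  have hpdeg : (φ - Polynomial.X).natDegree = φ.natDegree :=
    Polynomial.natDegree_sub_eq_left_of_natDegree_lt (by rw [Polynomial.natDegree_X]; omega)
  obtain ⟨z₀, hz₀⟩ := IsAlgClosed.exists_root (p := φ - Polynomial.X) (by
    rw [Polynomial.degree_eq_natDegree hpne]
    intro h
    have : (φ - Polynomial.X).natDegree = 0 := by exact_mod_cast h
    omega)
  have hfix : φ.eval z₀ = z₀ := by
    have h1 : Polynomial.eval z₀ (φ - Polynomial.X) = 0 := hz₀
    rw [Polynomial.eval_sub, Polynomial.eval_X, sub_eq_zero] at h1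
    exact h1
  have hfixiter : ∀ m, polyIter φ m z₀ = z₀ := by
    intro m
    induction m with
    | zero => rfl
    | succ m ih =>
      show (fun w => Polynomial.eval w φ)^[m + 1] z₀ = z₀
      rw [Function.iterate_succ_apply]
      simpa [hfix, polyIter] using ih
  -- preimages of z₀ are in the filled Julia set
  have hmemF : ∀ n (w : L), (ψ n).eval w = z₀ → w ∈ filledJulia φ := by
    intro n w hw
    simp only [filledJulia, Set.mem_setOf_eq]
    intro hT
    have hconst : ∀ m, polyIter φ (m + n) w = z₀ := by
      intro m
      have h1 : (fun w => Polynomial.eval w φ)^[n] w = z₀ := by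
        rw [← hw]; exact (hψeval n w).symm
      show (fun w => Polynomial.eval w φ)^[m + n] w = z₀
      rw [Function.iterate_add_apply, h1]
      exact hfixiter m
    obtain ⟨M, hM⟩ := Filter.eventually_atTop.mp (Filter.tendsto_atTop.mp hT (‖z₀‖ + 1))
    have h2 := hM (M + n) (by omega)
    rw [hconst M] at h2
    linarith
  -- main contradiction argument
  by_contra hbad
  push_neg at hbad
  have hbad' : ∀ j : ℕ, ∃ n, j + 1 ≤ n ∧ ∃ z : L,
      ‖polyIter φ n z‖ ≤ R ∧ δ < Metric.infDist z (filledJulia φ) := by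
    intro j
    obtain ⟨n, hn, hsub⟩ := hbad (j + 1) (by omega)
    rw [Set.not_subset] at hsub
    obtain ⟨z, hz1, hz2⟩ := hsub
    exact ⟨n, hn, z, hz1, not_le.mp hz2⟩
  choose nn hnn zz hzz1 hzz2 using hbad'
  have key : ∀ j, ∃ w : L, w ∈ filledJulia φ ∧
      ∀ y : L, ‖y - w‖ ≤ δ → ‖polyIter φ (nn j) y‖ ≤ max R ‖z₀‖ := by
    intro j
    have h := main_dichotomy hna (ψ (nn j)) (hψdeg _) z₀ R δ hR hδpos (zz j)
      (by rw [hψeval]; exact hzz1 j)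
    rcases h with ⟨w, hw1, hw2⟩ | ⟨w, hw1, hw2⟩
    · exfalso
      have hwF : w ∈ filledJulia φ := hmemF _ _ hw1
      have h3 : Metric.infDist (zz j) (filledJulia φ) ≤ δ :=
        le_trans (Metric.infDist_le_dist_of_mem hwF) (by rw [dist_eq_norm]; exact hw2)
      exact absurd h3 (not_le.mpr (hzz2 j))
    · exact ⟨w, hmemF _ _ hw1, fun y hy => by rw [← hψeval]; exact hw2 y hy⟩
  choose ww hwF hwball using key
  obtain ⟨a, haF, σ, hσ, hconv⟩ := hcompact.tendsto_subseq hwF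
  -- the open ball of radius δ around a is inside the filled Julia set
  have hball : ∀ y : L, ‖y - a‖ < δ → y ∈ filledJulia φ := by
    intro y hy
    simp only [filledJulia, Set.mem_setOf_eq]
    intro hT
    obtain ⟨M, hM⟩ := Filter.eventually_atTop.mp (Filter.tendsto_atTop.mp hT (max R ‖z₀‖ + 1))
    obtain ⟨J, hJ⟩ := Metric.tendsto_atTop.mp hconv δ hδpos
    set j := max J M with hjdef
    have hj1 : dist (ww (σ j)) a < δ := hJ j (le_max_left _ _)
    have hyw : ‖y - ww (σ j)‖ ≤ δ := by
      have h3 : y - ww (σ j) = (y - a) + (a - ww (σ j)) := by ring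
      rw [h3]
      refine le_trans (hna _ _) (max_le hy.le ?_)
      rw [norm_sub_rev]
      rw [dist_eq_norm] at hj1
      exact hj1.le
    have h4 := hwball (σ j) y hyw
    have h5 : M ≤ nn (σ j) := by
      have h6 := hnn (σ j)
      have h7 : j ≤ σ j := hσ.le_apply
      omega
    have h8 := hM (nn (σ j)) h5
    linarith
  -- construct infinitely many δ/‖x‖-separated points in the ball
  obtain ⟨x, hx⟩ := hnontriv
  have hsq : ∀ u : L, ∃ v : L, v ^ 2 = u :=
    fun u => IsAlgClosed.exists_pow_nat_eq u (by omega : 0 < 2)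
  choose sq hsqspec using hsq
  set b : ℕ → L := fun j => sq^[j] x with hbdef
  have hbnorm : ∀ j, ‖b (j + 1)‖ = Real.sqrt ‖b j‖ := by
    intro j
    have h1 : (b (j + 1)) ^ 2 = b j := by
      show (sq^[j + 1] x) ^ 2 = sq^[j] x
      rw [Function.iterate_succ_apply']
      exact hsqspec _
    have h2 : ‖b (j + 1)‖ ^ 2 = ‖b j‖ := by rw [← norm_pow, h1]
    rw [← h2, Real.sqrt_sq (norm_nonneg _)]
  have hb1 : ∀ j, 1 < ‖b j‖ := by
    intro j
    induction j with
    | zero => simpa [hbdef] using hx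
    | succ j ih =>
      rw [hbnorm j, show (1 : ℝ) = 1 ^ 2 by norm_num]
      exact Real.lt_sqrt_of_sq_lt (by simpa using ih)
  have hbanti : StrictAnti fun j => ‖b j‖ :=
    strictAnti_nat_of_succ_lt (fun j => by
      rw [hbnorm j]
      exact (Real.sqrt_lt' (lt_trans one_pos (hb1 j))).mpr
        (by nlinarith [hb1 j]))
  have hbc : ∀ j, ‖b j‖ ≤ ‖x‖ := by
    intro j
    have := hbanti.antitone (Nat.zero_le j)
    simpa [hbdef] using this
  have hbne : ∀ j, b j ≠ 0 := by
    intro j h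
    have := hb1 j
    rw [h, norm_zero] at this
    linarith
  set u : ℕ → L := fun j => a + x₀ * (b j)⁻¹ with hudef
  have huF : ∀ j, u j ∈ filledJulia φ := by
    intro j
    apply hball
    have h1 : u j - a = x₀ * (b j)⁻¹ := by rw [hudef]; ring
    rw [h1, norm_mul, norm_inv, hx₀n]
    calc δ * ‖b j‖⁻¹ < δ * 1 :=
          mul_lt_mul_of_pos_left (inv_lt_one_of_one_lt₀ (hb1 j)) hδpos
      _ = δ := mul_one δ
  have hxpos : (0 : ℝ) < ‖x‖ := lt_trans one_pos hx
  have husep : ∀ i j : ℕ, i ≠ j → δ / ‖x‖ ≤ ‖u i - u j‖ := by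
    have key2 : ∀ i j : ℕ, i < j → δ / ‖x‖ ≤ ‖u i - u j‖ := by
      intro i j hij
      have h1 : ‖b j‖ < ‖b i‖ := hbanti hij
      have hbjpos : (0 : ℝ) < ‖b j‖ := lt_trans one_pos (hb1 j)
      have h2 : ‖(b i)⁻¹‖ < ‖(b j)⁻¹‖ := by
        rw [norm_inv, norm_inv]
        exact inv_strictAnti₀ hbjpos h1
      have h3 : u i - u j = x₀ * ((b i)⁻¹ - (b j)⁻¹) := by rw [hudef]; ring
      have h4 : ‖(b i)⁻¹ - (b j)⁻¹‖ = ‖(b j)⁻¹‖ := by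
        rw [norm_sub_rev]
        exact ultra_norm_sub hna h2
      rw [h3, norm_mul, hx₀n, h4, norm_inv, div_eq_mul_inv]
      exact mul_le_mul_of_nonneg_left (inv_anti₀ hbjpos (hbc j)) hδpos.le
    intro i j hij
    rcases hij.lt_or_gt with h | h
    · exact key2 i j h
    · rw [norm_sub_rev]; exact key2 j i h
  -- contradiction with total boundedness
  set ε : ℝ := δ / ‖x‖ with hεdef
  have hεpos : 0 < ε := div_pos hδpos hxpos
  obtain ⟨T, hTfin, hTsub⟩ := Metric.totallyBounded_iff.mp hcompact.totallyBounded
    (ε / 2) (by linarith)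
  have hTmem : ∀ j : ℕ, ∃ y ∈ T, u j ∈ Metric.ball y (ε / 2) := by
    intro j
    have h1 := hTsub (huF j)
    simpa using h1
  choose gy hgyT hgyb using hTmem
  haveI : Finite T := hTfin.to_subtype
  obtain ⟨i, j, hij, hgij⟩ :=
    Finite.exists_ne_map_eq_of_infinite (fun j : ℕ => (⟨gy j, hgyT j⟩ : T))
  have hgij' : gy i = gy j := congrArg Subtype.val hgij
  have hd1 : dist (u i) (gy i) < ε / 2 := Metric.mem_ball.mp (hgyb i)
  have hd2 : dist (u j) (gy j) < ε / 2 := Metric.mem_ball.mp (hgyb j)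
  have hdist : dist (u i) (u j) < ε := by
    calc dist (u i) (u j) ≤ dist (u i) (gy i) + dist (gy i) (u j) := dist_triangle _ _ _
      _ < ε := by
          have t2 : dist (gy i) (u j) = dist (u j) (gy j) := by rw [hgij', dist_comm]
          rw [t2]
          linarith
  have hsep := husep i j hij
  rw [dist_eq_norm] at hdist
  rw [hεdef] at hdist
  linarith
end

section
/- Let L be an algebraically closed field complete with respect to a nontrivial non-archimedean absolute value, and let φ ∈ L[z] be a polynomial of degree d ≥ 2 whose filled Julia set F is compact. Let λ = ĥ_φ be the canonical local height of φ. If {S_n} is a sequence of finite subsets of L that is λ-taut, then {S_n} is F-tight. -/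
open Filter

/-- The canonical local height `ĥ_φ(z) = lim_{n → ∞} d^{-n} log⁺ ‖φ^n(z)‖`
(the limit exists; `Filter.limUnder` extracts it). -/
noncomputable def canonicalLocalHeight {L : Type*} [NormedField L] (φ : Polynomial L)
    (z : L) : ℝ :=
  limUnder atTop (fun n : ℕ => ((φ.natDegree : ℝ) ^ n)⁻¹ * logPlus ‖polyIter φ n z‖)

/- ------------------------------------------------------------------ -/
/- Auxiliary material for the proof of `stmt14`.                       -/
/- ------------------------------------------------------------------ -/

set_option linter.unusedSectionVars false

open Polynomial

section Aux

lemma logPlus_nonneg (t : ℝ) : 0 ≤ logPlus t := Real.log_nonneg (le_max_right _ _)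

variable {L : Type*} [NormedField L]

lemma ultra_add_eq (hna : ∀ x y : L, ‖x + y‖ ≤ max ‖x‖ ‖y‖) {v w : L}
    (h : ‖w‖ < ‖v‖) : ‖v + w‖ = ‖v‖ := by
  refine le_antisymm ((hna v w).trans (max_le le_rfl h.le)) ?_
  have h2 := hna (v + w) (-w)
  simp only [add_neg_cancel_right, norm_neg] at h2
  rcases max_cases ‖v + w‖ ‖w‖ with ⟨he, _⟩ | ⟨he, _⟩
  · rwa [he] at h2
  · rw [he] at h2; exact absurd (lt_of_le_of_lt h2 h) (lt_irrefl _)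

lemma multiset_prod_map_le (s : Multiset L) (f g : L → ℝ)
    (hf : ∀ x ∈ s, 0 ≤ f x) (hfg : ∀ x ∈ s, f x ≤ g x) :
    (s.map f).prod ≤ (s.map g).prod := by
  induction s using Multiset.induction_on with
  | empty => simp
  | cons a s ih =>
    simp only [Multiset.map_cons, Multiset.prod_cons]
    have h1 : (s.map f).prod ≤ (s.map g).prod :=
      ih (fun x hx => hf x (Multiset.mem_cons_of_mem hx))
        (fun x hx => hfg x (Multiset.mem_cons_of_mem hx))
    have hfa := hf a (Multiset.mem_cons_self a s)
    have hprod : (0:ℝ) ≤ (s.map f).prod := by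
      apply Multiset.prod_nonneg
      intro x hx
      obtain ⟨y, hy, rfl⟩ := Multiset.mem_map.mp hx
      exact hf y (Multiset.mem_cons_of_mem hy)
    exact mul_le_mul (hfg a (Multiset.mem_cons_self a s)) h1 hprod
      ((hfa.trans (hfg a (Multiset.mem_cons_self a s))))

lemma eval_norm_upper (φ : Polynomial L) (v : L) :
    ‖φ.eval v‖ ≤ (1 + ∑ i ∈ Finset.range (φ.natDegree+1), ‖φ.coeff i‖) * (max ‖v‖ 1)^φ.natDegree := by
  have hm1 : (1:ℝ) ≤ max ‖v‖ 1 := le_max_right _ _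
  have hm0 : (0:ℝ) ≤ max ‖v‖ 1 := by linarith
  calc ‖φ.eval v‖ = ‖∑ i ∈ Finset.range (φ.natDegree+1), φ.coeff i * v ^ i‖ := by
        rw [Polynomial.eval_eq_sum_range]
    _ ≤ ∑ i ∈ Finset.range (φ.natDegree+1), ‖φ.coeff i * v ^ i‖ := norm_sum_le _ _
    _ ≤ ∑ i ∈ Finset.range (φ.natDegree+1), ‖φ.coeff i‖ * (max ‖v‖ 1)^φ.natDegree := by
        apply Finset.sum_le_sum
        intro i hi
        rw [norm_mul, norm_pow]
        refine mul_le_mul_of_nonneg_left ?_ (norm_nonneg _)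
        calc ‖v‖^i ≤ (max ‖v‖ 1)^i := pow_le_pow_left₀ (norm_nonneg v) (le_max_left _ _) i
          _ ≤ (max ‖v‖ 1)^φ.natDegree := by
              refine pow_le_pow_right₀ hm1 ?_
              have := Finset.mem_range.mp hi; omega
    _ = (∑ i ∈ Finset.range (φ.natDegree+1), ‖φ.coeff i‖) * (max ‖v‖ 1)^φ.natDegree := by
        rw [Finset.sum_mul]
    _ ≤ _ := by
        refine mul_le_mul_of_nonneg_right ?_ (pow_nonneg hm0 _)
        linarith

lemma eval_norm_lower (φ : Polynomial L) (hd1 : 1 ≤ φ.natDegree) (ha : φ.leadingCoeff ≠ 0)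
    (v : L)
    (h1v : 1 ≤ ‖v‖)
    (hv : 2*(1 + ∑ i ∈ Finset.range (φ.natDegree+1), ‖φ.coeff i‖)/‖φ.leadingCoeff‖ ≤ ‖v‖) :
    ‖φ.leadingCoeff‖/2 * ‖v‖^φ.natDegree ≤ ‖φ.eval v‖ := by
  set d := φ.natDegree with hdd
  set A : ℝ := 1 + ∑ i ∈ Finset.range (d+1), ‖φ.coeff i‖ with hAdef
  have haN : (0:ℝ) < ‖φ.leadingCoeff‖ := norm_pos_iff.mpr ha
  have hA1 : (1:ℝ) ≤ A := by
    have : (0:ℝ) ≤ ∑ i ∈ Finset.range (d+1), ‖φ.coeff i‖ :=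
      Finset.sum_nonneg fun i _ => norm_nonneg _
    simp only [hAdef]; linarith
  have hsplit : φ.eval v = (∑ i ∈ Finset.range d, φ.coeff i * v ^ i) + φ.leadingCoeff * v ^ d := by
    rw [Polynomial.eval_eq_sum_range, Finset.sum_range_succ, Polynomial.coeff_natDegree]
  have htail : ‖∑ i ∈ Finset.range d, φ.coeff i * v ^ i‖ ≤ A * ‖v‖^(d-1) := by
    calc ‖∑ i ∈ Finset.range d, φ.coeff i * v ^ i‖
        ≤ ∑ i ∈ Finset.range d, ‖φ.coeff i * v ^ i‖ := norm_sum_le _ _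
      _ ≤ ∑ i ∈ Finset.range d, ‖φ.coeff i‖ * ‖v‖^(d-1) := by
          apply Finset.sum_le_sum
          intro i hi
          rw [norm_mul, norm_pow]
          refine mul_le_mul_of_nonneg_left ?_ (norm_nonneg _)
          refine pow_le_pow_right₀ h1v ?_
          have := Finset.mem_range.mp hi; omega
      _ = (∑ i ∈ Finset.range d, ‖φ.coeff i‖) * ‖v‖^(d-1) := by rw [Finset.sum_mul]
      _ ≤ A * ‖v‖^(d-1) := by
          refine mul_le_mul_of_nonneg_right ?_ (pow_nonneg (by linarith) _)
          have hsub : ∑ i ∈ Finset.range d, ‖φ.coeff i‖ ≤ ∑ i ∈ Finset.range (d+1), ‖φ.coeff i‖ :=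
            Finset.sum_le_sum_of_subset_of_nonneg
              (Finset.range_subset_range.mpr (by omega)) (fun i _ _ => norm_nonneg _)
          simp only [hAdef]; linarith
  have hlead : ‖φ.leadingCoeff * v ^ d‖ = ‖φ.leadingCoeff‖ * ‖v‖^d := by
    rw [norm_mul, norm_pow]
  have hge : ‖φ.leadingCoeff‖ * ‖v‖^d - A * ‖v‖^(d-1) ≤ ‖φ.eval v‖ := by
    have h1 : ‖φ.leadingCoeff * v ^ d‖ ≤ ‖φ.eval v‖ + ‖∑ i ∈ Finset.range d, φ.coeff i * v ^ i‖ := by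
      have : φ.leadingCoeff * v ^ d = φ.eval v - ∑ i ∈ Finset.range d, φ.coeff i * v ^ i := by
        rw [hsplit]; ring
      rw [this]
      exact norm_sub_le _ _
    rw [hlead] at h1
    linarith
  have hpow : ‖v‖^d = ‖v‖^(d-1) * ‖v‖ := by
    rw [← pow_succ]; congr 1; omega
  have hA' : A ≤ ‖φ.leadingCoeff‖/2 * ‖v‖ := by
    rw [div_le_iff₀ haN] at hv
    nlinarith
  have hkey : A * ‖v‖^(d-1) ≤ ‖φ.leadingCoeff‖/2 * ‖v‖^d := by
    calc A * ‖v‖^(d-1) ≤ (‖φ.leadingCoeff‖/2 * ‖v‖) * ‖v‖^(d-1) :=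
          mul_le_mul_of_nonneg_right hA' (pow_nonneg (by linarith) _)
      _ = ‖φ.leadingCoeff‖/2 * ‖v‖^d := by rw [hpow]; ring
  calc ‖φ.leadingCoeff‖/2 * ‖v‖^d
      = ‖φ.leadingCoeff‖ * ‖v‖^d - ‖φ.leadingCoeff‖/2 * ‖v‖^d := by ring
    _ ≤ ‖φ.leadingCoeff‖ * ‖v‖^d - A * ‖v‖^(d-1) := sub_le_sub_left hkey _
    _ ≤ ‖φ.eval v‖ := hge

lemma logPlus_dist_bound (φ : Polynomial L) (hd1 : 1 ≤ φ.natDegree) (ha : φ.leadingCoeff ≠ 0) :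
    ∃ Cst R₁ : ℝ, 0 ≤ Cst ∧ 1 ≤ R₁ ∧
      (∀ v : L, R₁ ≤ ‖v‖ → ‖φ.leadingCoeff‖/2 * ‖v‖^φ.natDegree ≤ ‖φ.eval v‖ ∧ 1 ≤ ‖φ.eval v‖) ∧
      (∀ v : L, |logPlus ‖φ.eval v‖ - (φ.natDegree : ℝ) * logPlus ‖v‖| ≤ Cst) := by
  set d := φ.natDegree with hdd
  set A : ℝ := 1 + ∑ i ∈ Finset.range (d+1), ‖φ.coeff i‖ with hAdef
  have haN : (0:ℝ) < ‖φ.leadingCoeff‖ := norm_pos_iff.mpr ha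
  have hA1 : (1:ℝ) ≤ A := by
    have : (0:ℝ) ≤ ∑ i ∈ Finset.range (d+1), ‖φ.coeff i‖ :=
      Finset.sum_nonneg fun i _ => norm_nonneg _
    simp only [hAdef]; linarith
  set R₁ : ℝ := max (max 1 (2*A/‖φ.leadingCoeff‖)) (2/‖φ.leadingCoeff‖) with hRdef
  have hR1 : (1:ℝ) ≤ R₁ := le_trans (le_max_left 1 _) (le_max_left _ _)
  have hlow : ∀ v : L, R₁ ≤ ‖v‖ → ‖φ.leadingCoeff‖/2 * ‖v‖^d ≤ ‖φ.eval v‖ ∧ 1 ≤ ‖φ.eval v‖ := by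
    intro v hv
    have h1v : 1 ≤ ‖v‖ := le_trans hR1 hv
    have h2v : 2*A/‖φ.leadingCoeff‖ ≤ ‖v‖ :=
      le_trans (le_trans (le_max_right 1 _) (le_max_left _ _)) hv
    have h3v : 2/‖φ.leadingCoeff‖ ≤ ‖v‖ := le_trans (le_max_right _ _) hv
    have hmain := eval_norm_lower φ hd1 ha v h1v h2v
    refine ⟨hmain, ?_⟩
    have hpowv : ‖v‖ ≤ ‖v‖^d := le_self_pow₀ h1v (by omega)
    calc (1:ℝ) = ‖φ.leadingCoeff‖/2 * (2/‖φ.leadingCoeff‖) := by field_simp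
      _ ≤ ‖φ.leadingCoeff‖/2 * ‖v‖^d :=
          mul_le_mul_of_nonneg_left (le_trans h3v hpowv) (by linarith)
      _ ≤ ‖φ.eval v‖ := hmain
  refine ⟨Real.log A + d * Real.log R₁ + |Real.log (‖φ.leadingCoeff‖/2)|, R₁, ?_, hR1, hlow, ?_⟩
  · have h1 : 0 ≤ Real.log A := Real.log_nonneg hA1
    have h2 : 0 ≤ Real.log R₁ := Real.log_nonneg hR1
    have h3 : 0 ≤ |Real.log (‖φ.leadingCoeff‖/2)| := abs_nonneg _
    have h4 : (0:ℝ) ≤ d := Nat.cast_nonneg _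
    positivity
  intro v
  have hlogA : 0 ≤ Real.log A := Real.log_nonneg hA1
  have hlogR : 0 ≤ Real.log R₁ := Real.log_nonneg hR1
  have habs : Real.log (‖φ.leadingCoeff‖/2) ≥ -|Real.log (‖φ.leadingCoeff‖/2)| :=
    neg_abs_le _
  have hd0 : (0:ℝ) ≤ (d:ℝ) := Nat.cast_nonneg _
  rw [abs_le]
  constructor
  · rcases le_or_gt R₁ ‖v‖ with hv | hv
    · have h1v : 1 ≤ ‖v‖ := le_trans hR1 hv
      obtain ⟨hmain, h1e⟩ := hlow v hv
      have hlp1 : logPlus ‖φ.eval v‖ = Real.log ‖φ.eval v‖ := by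
        unfold logPlus; rw [max_eq_left h1e]
      have hlp2 : logPlus ‖v‖ = Real.log ‖v‖ := by
        unfold logPlus; rw [max_eq_left h1v]
      have hle : Real.log (‖φ.leadingCoeff‖/2 * ‖v‖^d) ≤ Real.log ‖φ.eval v‖ :=
        Real.log_le_log (by positivity) hmain
      rw [Real.log_mul (by positivity) (by positivity), Real.log_pow] at hle
      rw [hlp1, hlp2]
      have : -(Real.log A + ↑d * Real.log R₁ + |Real.log (‖φ.leadingCoeff‖/2)|)
          ≤ Real.log (‖φ.leadingCoeff‖/2) := by
        have : 0 ≤ ↑d * Real.log R₁ := mul_nonneg hd0 hlogR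
        have := neg_abs_le (Real.log (‖φ.leadingCoeff‖/2))
        linarith
      linarith
    · have h1 : 0 ≤ logPlus ‖φ.eval v‖ := logPlus_nonneg _
      have h2 : logPlus ‖v‖ ≤ Real.log R₁ := by
        unfold logPlus
        refine Real.log_le_log (by positivity) (max_le hv.le hR1)
      have h3 : (d:ℝ) * logPlus ‖v‖ ≤ d * Real.log R₁ :=
        mul_le_mul_of_nonneg_left h2 hd0
      have := abs_nonneg (Real.log (‖φ.leadingCoeff‖/2))
      linarith
  · have hup := eval_norm_upper φ v
    have hm1 : (1:ℝ) ≤ max ‖v‖ 1 := le_max_right _ _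
    have h1 : max ‖φ.eval v‖ 1 ≤ A * (max ‖v‖ 1)^d := by
      refine max_le hup ?_
      have hp : (1:ℝ) ≤ (max ‖v‖ 1)^d := one_le_pow₀ hm1
      nlinarith
    have h2 : logPlus ‖φ.eval v‖ ≤ Real.log (A * (max ‖v‖ 1)^d) :=
      Real.log_le_log (by positivity) h1
    rw [Real.log_mul (by positivity) (by positivity), Real.log_pow] at h2
    have : logPlus ‖v‖ = Real.log (max ‖v‖ 1) := rfl
    have h4 : 0 ≤ ↑d * Real.log R₁ := mul_nonneg hd0 hlogR
    have h5 := abs_nonneg (Real.log (‖φ.leadingCoeff‖/2))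
    rw [this]
    linarith

end Aux

section IterAux

lemma polyIter_succ {L : Type*} [CommRing L] (φ : Polynomial L) (m : ℕ) (w : L) :
    polyIter φ (m+1) w = φ.eval (polyIter φ m w) := by
  unfold polyIter; rw [Function.iterate_succ_apply']

lemma polyIter_add {L : Type*} [CommRing L] (φ : Polynomial L) (a b : ℕ) (w : L) :
    polyIter φ (a+b) w = polyIter φ a (polyIter φ b w) := by
  unfold polyIter; rw [Function.iterate_add_apply]

end IterAux

section Height
variable {L : Type*} [NormedField L] (φ : Polynomial L)

noncomputable def useq (z : L) (n : ℕ) : ℝ :=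
  ((φ.natDegree : ℝ)^n)⁻¹ * logPlus ‖polyIter φ n z‖

variable {φ} (hd : 2 ≤ φ.natDegree) {Cst : ℝ} (hC0 : 0 ≤ Cst)
  (hC : ∀ v : L, |logPlus ‖φ.eval v‖ - (φ.natDegree : ℝ) * logPlus ‖v‖| ≤ Cst)

include hd hC0 hC

lemma useq_step (z : L) (n : ℕ) :
    dist (useq φ z n) (useq φ z (n+1))
      ≤ (Cst * (φ.natDegree:ℝ)⁻¹) * ((φ.natDegree:ℝ)⁻¹)^n := by
  have h2 : (2:ℝ) ≤ (φ.natDegree:ℝ) := by exact_mod_cast hd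
  have hdpos : (0:ℝ) < (φ.natDegree:ℝ) := by linarith
  have hppos : (0:ℝ) < ((φ.natDegree:ℝ))^(n+1) := pow_pos hdpos _
  rw [Real.dist_eq]
  have heq : useq φ z n - useq φ z (n+1)
      = ((φ.natDegree:ℝ)^(n+1))⁻¹ *
        ((φ.natDegree:ℝ) * logPlus ‖polyIter φ n z‖ - logPlus ‖polyIter φ (n+1) z‖) := by
    unfold useq
    rw [pow_succ]
    field_simp
  rw [heq, abs_mul, abs_of_pos (inv_pos.mpr hppos)]
  have hb : |(φ.natDegree:ℝ) * logPlus ‖polyIter φ n z‖ - logPlus ‖polyIter φ (n+1) z‖| ≤ Cst := by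
    rw [abs_sub_comm, polyIter_succ]
    exact hC (polyIter φ n z)
  calc ((φ.natDegree:ℝ)^(n+1))⁻¹ * |_| ≤ ((φ.natDegree:ℝ)^(n+1))⁻¹ * Cst :=
        mul_le_mul_of_nonneg_left hb (le_of_lt (inv_pos.mpr hppos))
    _ = (Cst * (φ.natDegree:ℝ)⁻¹) * ((φ.natDegree:ℝ)⁻¹)^n := by
        rw [← inv_pow, pow_succ]
        ring

lemma useq_cauchy (z : L) : CauchySeq (useq φ z) := by
  have h2 : (2:ℝ) ≤ (φ.natDegree:ℝ) := by exact_mod_cast hd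
  refine cauchySeq_of_le_geometric ((φ.natDegree:ℝ)⁻¹) (Cst * (φ.natDegree:ℝ)⁻¹) ?_
    (useq_step hd hC0 hC z)
  rw [inv_lt_one_iff₀]
  right; linarith

lemma useq_tendsto (z : L) :
    Tendsto (useq φ z) atTop (nhds (canonicalLocalHeight φ z)) :=
  (useq_cauchy hd hC0 hC z).tendsto_limUnder

lemma height_nonneg (z : L) : 0 ≤ canonicalLocalHeight φ z := by
  refine ge_of_tendsto (useq_tendsto hd hC0 hC z) (Eventually.of_forall fun n => ?_)
  have h2 : (2:ℝ) ≤ (φ.natDegree:ℝ) := by exact_mod_cast hd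
  have : (0:ℝ) < ((φ.natDegree:ℝ))^n := pow_pos (by linarith) _
  exact mul_nonneg (by positivity) (logPlus_nonneg _)

lemma height_ge (z : L) (n : ℕ) :
    useq φ z n - Cst * ((φ.natDegree:ℝ)⁻¹)^n ≤ canonicalLocalHeight φ z := by
  have h2 : (2:ℝ) ≤ (φ.natDegree:ℝ) := by exact_mod_cast hd
  have hdpos : (0:ℝ) < (φ.natDegree:ℝ) := by linarith
  have hrpos : (0:ℝ) < (φ.natDegree:ℝ)⁻¹ := inv_pos.mpr hdpos
  have hinv : (φ.natDegree:ℝ)⁻¹ * (φ.natDegree:ℝ) = 1 := inv_mul_cancel₀ (ne_of_gt hdpos)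
  have hr2 : (φ.natDegree:ℝ)⁻¹ ≤ 1/2 := by nlinarith
  have hr1 : (φ.natDegree:ℝ)⁻¹ < 1 := by linarith
  have hdist := dist_le_of_le_geometric_of_tendsto ((φ.natDegree:ℝ)⁻¹)
    (Cst * (φ.natDegree:ℝ)⁻¹) hr1 (useq_step hd hC0 hC z) (useq_tendsto hd hC0 hC z) n
  have hkey : (Cst * (φ.natDegree:ℝ)⁻¹) * ((φ.natDegree:ℝ)⁻¹)^n / (1 - (φ.natDegree:ℝ)⁻¹)
      ≤ Cst * ((φ.natDegree:ℝ)⁻¹)^n := by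
    rw [div_le_iff₀ (by linarith)]
    have hp : (0:ℝ) ≤ ((φ.natDegree:ℝ)⁻¹)^n := le_of_lt (pow_pos hrpos _)
    nlinarith [mul_nonneg (mul_nonneg hC0 hp) (show (0:ℝ) ≤ 1 - 2*(φ.natDegree:ℝ)⁻¹ by linarith)]
  rw [Real.dist_eq, abs_le] at hdist
  linarith [hdist.1]

end Height

section Roots
variable {L : Type*} [NormedField L] [IsAlgClosed L]

lemma exists_fixed (φ : Polynomial L) (hd : 2 ≤ φ.natDegree) : ∃ x₀ : L, φ.eval x₀ = x₀ := by
  have h1 : (φ - X).natDegree = φ.natDegree := by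
    refine natDegree_sub_eq_left_of_natDegree_lt ?_
    rw [natDegree_X]; omega
  have hpos : 0 < (φ - X).natDegree := by omega
  obtain ⟨x₀, hx₀⟩ := IsAlgClosed.exists_root (φ - X)
    (natDegree_pos_iff_degree_pos.mp hpos).ne'
  refine ⟨x₀, ?_⟩
  have := hx₀
  rw [IsRoot, eval_sub, eval_X, sub_eq_zero] at this
  exact this

lemma fixed_iter {L' : Type*} [CommRing L'] (φ : Polynomial L') {x₀ : L'}
    (hfix : φ.eval x₀ = x₀) (k : ℕ) : polyIter φ k x₀ = x₀ :=
  Function.iterate_fixed hfix k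

variable (φ : Polynomial L) (hd : 2 ≤ φ.natDegree) {x₀ : L} (hfix : φ.eval x₀ = x₀)

/-- the iterate polynomial -/
noncomputable def iterPoly (φ : Polynomial L) (m : ℕ) : Polynomial L := φ.comp^[m] X

lemma iterPoly_eval (m : ℕ) (w : L) : (iterPoly φ m).eval w = polyIter φ m w := by
  induction m with
  | zero => simp [iterPoly, polyIter]
  | succ m ih =>
    unfold iterPoly
    rw [Function.iterate_succ_apply', eval_comp, polyIter_succ]
    unfold iterPoly at ih
    rw [ih]

lemma iterPoly_natDegree (m : ℕ) : (iterPoly φ m).natDegree = φ.natDegree ^ m := by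
  unfold iterPoly
  rw [natDegree_iterate_comp, natDegree_X, mul_one]

include hd in
lemma iterQ_facts (m : ℕ) :
    ((iterPoly φ m - C x₀).natDegree = φ.natDegree ^ m) ∧ (iterPoly φ m - C x₀) ≠ 0 ∧
    Multiset.card (iterPoly φ m - C x₀).roots = φ.natDegree ^ m := by
  have h1 : (iterPoly φ m - C x₀).natDegree = φ.natDegree ^ m := by
    rw [natDegree_sub_C, iterPoly_natDegree]
  have hpos : 0 < φ.natDegree ^ m := Nat.pow_pos (by omega)
  have h2 : (iterPoly φ m - C x₀) ≠ 0 := by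
    intro h
    rw [h, natDegree_zero] at h1
    omega
  refine ⟨h1, h2, ?_⟩
  rw [← h1]
  exact (splits_iff_card_roots.mp (IsAlgClosed.splits _))

include hd in
lemma iterQ_eval_norm (m : ℕ) (w : L) :
    ‖polyIter φ m w - x₀‖ = ‖(iterPoly φ m - C x₀).leadingCoeff‖ *
      (((iterPoly φ m - C x₀).roots).map (fun u => ‖w - u‖)).prod := by
  obtain ⟨h1, h2, h3⟩ := iterQ_facts φ hd (x₀ := x₀) m
  have hfact := C_leadingCoeff_mul_prod_multiset_X_sub_C (p := iterPoly φ m - C x₀) (by rw [h3, h1])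
  have heval : polyIter φ m w - x₀ = (iterPoly φ m - C x₀).eval w := by
    rw [eval_sub, eval_C, iterPoly_eval]
  conv_lhs => rw [heval, ← hfact]
  rw [eval_mul, eval_C, eval_multiset_prod, norm_mul]
  congr 1
  rw [Multiset.map_map]
  have : ‖((iterPoly φ m - C x₀).roots.map (eval w ∘ fun a => X - C a)).prod‖
      = (((iterPoly φ m - C x₀).roots.map (eval w ∘ fun a => X - C a)).map (fun x => ‖x‖)).prod := by
    induction ((iterPoly φ m - C x₀).roots.map (eval w ∘ fun a => X - C a)) using
      Multiset.induction_on with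
    | empty => simp
    | cons a s ih => simp [norm_mul, ih]
  rw [this, Multiset.map_map]
  congr 1
  ext u
  simp

include hd hfix in
lemma iterQ_roots_julia (m : ℕ) (u : L) (hu : u ∈ (iterPoly φ m - C x₀).roots) :
    u ∈ filledJulia φ := by
  obtain ⟨h1, h2, h3⟩ := iterQ_facts φ hd (x₀ := x₀) m
  have hru : (iterPoly φ m - C x₀).IsRoot u := (mem_roots h2).mp hu
  have hiter : polyIter φ m u = x₀ := by
    have := hru
    rw [IsRoot, eval_sub, eval_C, sub_eq_zero, iterPoly_eval] at this
    exact this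
  intro htend
  obtain ⟨n, hn1, hn2⟩ := ((htend.eventually_ge_atTop (‖x₀‖ + 1)).and (eventually_ge_atTop m)).exists
  have heqn : n - m + m = n := by omega
  have : polyIter φ n u = x₀ := by
    rw [← heqn, polyIter_add, hiter, fixed_iter φ hfix]
  rw [this] at hn1
  linarith

include hd hfix in
lemma heart (hna : ∀ x y : L, ‖x + y‖ ≤ max ‖x‖ ‖y‖) (R' : ℝ) (δ : ℝ)
    (m : ℕ) (z : L) (hz : ‖polyIter φ m z - x₀‖ ≤ R')
    (hfar : δ < Metric.infDist z (filledJulia φ)) :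
    ∃ u ∈ filledJulia φ, ∀ w, dist w u ≤ δ → ‖polyIter φ m w - x₀‖ ≤ R' := by
  classical
  obtain ⟨h1, h2, h3⟩ := iterQ_facts φ hd (x₀ := x₀) m
  set Q := iterPoly φ m - C x₀ with hQ
  have hpos : 0 < φ.natDegree ^ m := Nat.pow_pos (by omega)
  have hcard : 0 < Multiset.card Q.roots := by rw [h3]; exact hpos
  have hne : Q.roots.toFinset.Nonempty := by
    obtain ⟨u, hu⟩ := Multiset.card_pos_iff_exists_mem.mp hcard
    exact ⟨u, Multiset.mem_toFinset.mpr hu⟩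
  obtain ⟨u, hu, hmin⟩ := Finset.exists_min_image Q.roots.toFinset (fun u => ‖z - u‖) hne
  have huroots := Multiset.mem_toFinset.mp hu
  have huF : u ∈ filledJulia φ := iterQ_roots_julia φ hd hfix m u huroots
  refine ⟨u, huF, ?_⟩
  intro w hw
  have hinf : Metric.infDist z (filledJulia φ) ≤ dist z u := Metric.infDist_le_dist_of_mem huF
  have hδu : δ < ‖z - u‖ := by rw [← dist_eq_norm]; linarith
  have hwz : ‖w - z‖ ≤ ‖z - u‖ := by
    have hsp : w - z = (w - u) + (u - z) := by ring
    rw [hsp]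
    refine (hna _ _).trans (max_le ?_ (norm_sub_rev u z).le)
    rw [dist_eq_norm] at hw; linarith
  have hper : ∀ y ∈ Q.roots, ‖w - y‖ ≤ ‖z - y‖ := by
    intro y hy
    have hzy : ‖z - u‖ ≤ ‖z - y‖ := hmin y (Multiset.mem_toFinset.mpr hy)
    have hsp : w - y = (w - z) + (z - y) := by ring
    rw [hsp]
    exact (hna _ _).trans (max_le (hwz.trans hzy) le_rfl)
  have hprod : (Q.roots.map (fun y => ‖w - y‖)).prod ≤ (Q.roots.map (fun y => ‖z - y‖)).prod :=
    multiset_prod_map_le _ _ _ (fun y _ => norm_nonneg _) hper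
  have he1 := iterQ_eval_norm φ hd (x₀:=x₀) m w
  have he2 := iterQ_eval_norm φ hd (x₀:=x₀) m z
  rw [he1]
  rw [he2] at hz
  calc ‖Q.leadingCoeff‖ * (Q.roots.map (fun y => ‖w - y‖)).prod
      ≤ ‖Q.leadingCoeff‖ * (Q.roots.map (fun y => ‖z - y‖)).prod :=
        mul_le_mul_of_nonneg_left hprod (norm_nonneg _)
    _ ≤ R' := hz

end Roots

section Sep
variable {L : Type*} [NormedField L] [IsAlgClosed L]

lemma exists_sep_seq (hna : ∀ x y : L, ‖x + y‖ ≤ max ‖x‖ ‖y‖)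
    {x : L} (hx : 1 < ‖x‖) {δ : ℝ} (hδ : 0 < δ) :
    ∃ p : ℕ → L, (∀ j, ‖p j‖ ≤ δ) ∧ (∀ j k, j ≠ k → δ/2 < ‖p j - p k‖) := by
  set t := ‖x‖ with ht
  obtain ⟨n₁, hn₁⟩ := pow_unbounded_of_one_lt t (by norm_num : (1:ℝ) < 2)
  have hn₁0 : 0 < n₁ := by
    rcases Nat.eq_zero_or_pos n₁ with h | h
    · rw [h] at hn₁; simp at hn₁; linarith
    · exact h
  obtain ⟨y₁, hy₁⟩ := IsAlgClosed.exists_pow_nat_eq x hn₁0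
  set s := ‖y₁‖ with hs_def
  have hs : s ^ n₁ = t := by rw [hs_def, ← norm_pow, hy₁]
  have hs0 : 0 < s := by
    rcases (norm_nonneg y₁).lt_or_eq with h | h
    · exact h
    · exfalso; rw [hs_def] at hs; rw [← h] at hs
      rw [zero_pow (by omega)] at hs; linarith
  have hs1 : 1 < s := by
    by_contra h
    push_neg at h
    have : s ^ n₁ ≤ 1 := pow_le_one₀ (le_of_lt hs0) h
    rw [hs] at this; linarith
  have hs2 : s < 2 := by
    by_contra h
    push_neg at h
    have : (2:ℝ) ^ n₁ ≤ s ^ n₁ := pow_le_pow_left₀ (by norm_num) h n₁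
    rw [hs] at this; linarith
  obtain ⟨k, hk⟩ := exists_mem_Ioc_zpow hδ hs1
  obtain ⟨hk1, hk2⟩ := hk
  have hy₁0 : y₁ ≠ 0 := by
    intro h; rw [h, norm_zero] at hs_def; rw [hs_def] at hs1; linarith
  set e : L := y₁ ^ (k : ℤ) with he_def
  have he : ‖e‖ = s ^ k := by rw [he_def, norm_zpow]
  have hsk0 : (0:ℝ) < s ^ k := zpow_pos hs0 k
  have he1 : ‖e‖ < δ := by rw [he]; exact hk1
  have he2 : δ/2 < ‖e‖ := by
    rw [he]
    have : s ^ (k+1) = s ^ k * s := zpow_add_one₀ (ne_of_gt hs0) k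
    rw [this] at hk2
    nlinarith
  have he0 : (0:ℝ) < ‖e‖ := lt_trans (by linarith) he2
  set ce : ℝ := 2 * ‖e‖ / δ with hce_def
  have hce : 1 < ce := by rw [hce_def, lt_div_iff₀ hδ]; linarith
  obtain ⟨M, hM⟩ := pow_unbounded_of_one_lt t hce
  have hroot : ∀ j : ℕ, ∃ y : L, y ^ (M + j + 1) = x := fun j =>
    IsAlgClosed.exists_pow_nat_eq x (by omega)
  choose y hy using hroot
  have hσ : ∀ j, ‖y j‖ ^ (M + j + 1) = t := by
    intro j; rw [← norm_pow, hy j]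
  have hσ1 : ∀ j, 1 < ‖y j‖ := by
    intro j
    by_contra h
    push_neg at h
    have : ‖y j‖ ^ (M + j + 1) ≤ 1 := pow_le_one₀ (norm_nonneg _) h
    rw [hσ j] at this; linarith
  have hσce : ∀ j, ‖y j‖ < ce := by
    intro j
    by_contra h
    push_neg at h
    have h1 : ce ^ (M + j + 1) ≤ ‖y j‖ ^ (M + j + 1) :=
      pow_le_pow_left₀ (by linarith) h _
    have h2 : ce ^ M ≤ ce ^ (M + j + 1) := pow_le_pow_right₀ (le_of_lt hce) (by omega)
    rw [hσ j] at h1; linarith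
  have hy0 : ∀ j, y j ≠ 0 := by
    intro j h
    have := hσ1 j; rw [h, norm_zero] at this; linarith
  refine ⟨fun j => e * (y j)⁻¹, ?_, ?_⟩
  · intro j
    have : ‖e * (y j)⁻¹‖ = ‖e‖ / ‖y j‖ := by
      rw [norm_mul, norm_inv, div_eq_mul_inv]
    rw [this]
    have h1 : ‖e‖ / ‖y j‖ < ‖e‖ := div_lt_self he0 (hσ1 j)
    linarith
  · intro j k' hjk
    have hnorm : ∀ j, ‖e * (y j)⁻¹‖ = ‖e‖ / ‖y j‖ := fun j => by
      rw [norm_mul, norm_inv, div_eq_mul_inv]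
    have hgt : ∀ j, δ/2 < ‖e * (y j)⁻¹‖ := by
      intro j
      rw [hnorm j]
      have h1 : ‖e‖ / ce < ‖e‖ / ‖y j‖ :=
        div_lt_div_of_pos_left he0 (by linarith [hσ1 j]) (hσce j)
      have h2 : ‖e‖ / ce = δ/2 := by
        rw [hce_def]; field_simp
      linarith
    have hneq : ‖e * (y j)⁻¹‖ ≠ ‖e * (y k')⁻¹‖ := by
      rw [hnorm j, hnorm k']
      intro h
      have hyj : ‖y j‖ = ‖y k'‖ := by
        rw [div_eq_div_iff (by linarith [hσ1 j]) (by linarith [hσ1 k'])] at h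
        exact mul_left_cancel₀ (ne_of_gt he0) (by linarith)
      rcases Nat.lt_or_ge (M + j + 1) (M + k' + 1) with hlt | hge
      · have hp := pow_lt_pow_right₀ (hσ1 j) hlt
        rw [hσ j, hyj, hσ k'] at hp
        exact lt_irrefl _ hp
      · have hlt2 : M + k' + 1 < M + j + 1 := by omega
        have hp := pow_lt_pow_right₀ (hσ1 k') hlt2
        rw [hσ k', ← hyj, hσ j] at hp
        exact lt_irrefl _ hp
    have key : ∀ a b : L, ‖a‖ < ‖b‖ → δ/2 < ‖b‖ → δ/2 < ‖a - b‖ := by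
      intro a b h hb
      have h2 : ‖b‖ ≤ max ‖b - a‖ ‖a‖ :=
        le_trans (le_of_eq (congrArg norm (by ring : b = (b - a) + a))) (hna _ _)
      have h3 : ‖b‖ ≤ ‖b - a‖ := by
        rcases max_cases ‖b - a‖ ‖a‖ with ⟨hm, _⟩ | ⟨hm, _⟩
        · rwa [hm] at h2
        · rw [hm] at h2; linarith
      rw [norm_sub_rev]
      linarith
    rcases lt_or_gt_of_ne hneq with hlt | hlt
    · exact key _ _ hlt (hgt k')
    · rw [norm_sub_rev]
      exact key _ _ hlt (hgt j)

lemma ball_not_in_compact (hna : ∀ x y : L, ‖x + y‖ ≤ max ‖x‖ ‖y‖)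
    {x : L} (hx : 1 < ‖x‖) {F : Set L} (hF : IsCompact F)
    {u : L} {δ : ℝ} (hδ : 0 < δ) (hsub : Metric.closedBall u δ ⊆ F) : False := by
  obtain ⟨p, hp1, hp2⟩ := exists_sep_seq hna hx hδ
  set q : ℕ → L := fun j => u + p j with hq
  have hqF : ∀ j, q j ∈ F := by
    intro j
    apply hsub
    rw [Metric.mem_closedBall, dist_eq_norm]
    simpa [hq] using hp1 j
  obtain ⟨b, _, g, hg, hconv⟩ := hF.tendsto_subseq hqF
  obtain ⟨N, hN⟩ := Metric.tendsto_atTop.mp hconv (δ/4) (by linarith)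
  have h1 := hN N le_rfl
  have h2 := hN (N+1) (by omega)
  have hne : g N ≠ g (N+1) := ne_of_lt (hg (by omega))
  have hsep := hp2 (g N) (g (N+1)) hne
  have hqd : dist (q (g N)) (q (g (N+1))) = ‖p (g N) - p (g (N+1))‖ := by
    rw [dist_eq_norm]; simp [hq]
  have htri := dist_triangle (q (g N)) b (q (g (N+1)))
  rw [dist_comm b _] at htri
  rw [hqd] at htri
  simp only [Function.comp_apply] at h1 h2
  linarith

end Sep

/-- Let `L` be an algebraically closed field complete with respect to a
nontrivial non-archimedean absolute value, and `φ ∈ L[z]` of degree `d ≥ 2` with compact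
filled Julia set `F`.  If `{S_n}` is a sequence of finite subsets of `L` which is taut with
respect to the canonical local height `ĥ_φ`, then `{S_n}` is `F`-tight. -/
theorem stmt14 {L : Type*} [NormedField L] [IsAlgClosed L] [CompleteSpace L]
    (hnontriv : ∃ x : L, 1 < ‖x‖)
    (hna : ∀ x y : L, ‖x + y‖ ≤ max ‖x‖ ‖y‖)
    (φ : Polynomial L) (hd : 2 ≤ φ.natDegree)
    (hcompact : IsCompact (filledJulia φ))
    (S : ℕ → Finset L) (htaut : IsTaut S (canonicalLocalHeight φ)) :
    IsTight S (filledJulia φ) := by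
  classical
  obtain ⟨x, hx⟩ := hnontriv
  have hd1 : 1 ≤ φ.natDegree := by omega
  have hφne : φ ≠ 0 := by
    intro h
    rw [h, natDegree_zero] at hd
    omega
  have ha : φ.leadingCoeff ≠ 0 := leadingCoeff_ne_zero.mpr hφne
  have haN : (0:ℝ) < ‖φ.leadingCoeff‖ := norm_pos_iff.mpr ha
  obtain ⟨Cst, R₁, hC0, hR1, hlowR, hC⟩ := logPlus_dist_bound φ hd1 ha
  obtain ⟨x₀, hfix⟩ := exists_fixed φ hd
  set F := filledJulia φ with hFdef
  -- escape radius
  set R' : ℝ := max (max (max R₁ (2*‖x₀‖)) (8/‖φ.leadingCoeff‖)) (2*Real.exp (Cst+1)) with hR'def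
  have hR'R₁ : R₁ ≤ R' :=
    le_trans (le_max_left _ _) (le_trans (le_max_left _ _) (le_max_left _ _))
  have hR'1 : 1 ≤ R' := le_trans hR1 hR'R₁
  have hR'x₀ : 2*‖x₀‖ ≤ R' :=
    le_trans (le_max_right _ _) (le_trans (le_max_left _ _) (le_max_left _ _))
  have hR'8 : 8/‖φ.leadingCoeff‖ ≤ R' := le_trans (le_max_right _ _) (le_max_left _ _)
  have hR'exp : 2*Real.exp (Cst+1) ≤ R' := le_max_right _ _
  -- norm identity in escape region
  have hnormeq : ∀ v : L, R' < ‖v - x₀‖ → ‖v‖ = ‖v - x₀‖ := by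
    intro v h
    have hx₀n : ‖x₀‖ < ‖v - x₀‖ := by
      have h1 : ‖x₀‖ ≤ R'/2 := by linarith
      linarith
    calc ‖v‖ = ‖(v - x₀) + x₀‖ := congrArg norm (by ring)
      _ = ‖v - x₀‖ := ultra_add_eq hna hx₀n
  -- escape estimate
  have hesc : ∀ v : L, R' < ‖v - x₀‖ → 2*‖v - x₀‖ ≤ ‖φ.eval v - x₀‖ := by
    intro v h
    have hveq := hnormeq v h
    have hvR₁ : R₁ ≤ ‖v‖ := by rw [hveq]; linarith
    obtain ⟨hmain, h1e⟩ := hlowR v hvR₁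
    have h1v : 1 ≤ ‖v‖ := le_trans hR1 hvR₁
    have hvR' : R' < ‖v‖ := by rw [hveq]; exact h
    have hp4 : 4*‖v‖ ≤ ‖φ.eval v‖ := by
      have hpow : ‖v‖^(φ.natDegree) = ‖v‖^(φ.natDegree - 1) * ‖v‖ := by
        rw [← pow_succ]; congr 1; omega
      have hvd : ‖v‖ ≤ ‖v‖^(φ.natDegree - 1) := le_self_pow₀ h1v (by omega)
      have h8 : 8/‖φ.leadingCoeff‖ ≤ ‖v‖^(φ.natDegree - 1) := by
        have : 8/‖φ.leadingCoeff‖ ≤ ‖v‖ := by linarith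
        linarith
      have h4' : 4 ≤ ‖φ.leadingCoeff‖/2 * ‖v‖^(φ.natDegree-1) := by
        rw [div_le_iff₀ haN] at h8
        nlinarith
      calc 4*‖v‖ ≤ (‖φ.leadingCoeff‖/2 * ‖v‖^(φ.natDegree-1)) * ‖v‖ := by nlinarith
        _ = ‖φ.leadingCoeff‖/2 * ‖v‖^φ.natDegree := by rw [hpow]; ring
        _ ≤ ‖φ.eval v‖ := hmain
    have hxe : ‖x₀‖ < ‖φ.eval v‖ := by
      have h1 : ‖x₀‖ ≤ R'/2 := by linarith
      linarith
    have heq2 : ‖φ.eval v - x₀‖ = ‖φ.eval v‖ := by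
      calc ‖φ.eval v - x₀‖ = ‖φ.eval v + (-x₀)‖ := congrArg norm (by ring)
        _ = ‖φ.eval v‖ := ultra_add_eq hna (by rwa [norm_neg])
    rw [heq2]
    rw [← hveq]
    linarith
  -- the sets T m
  set TT : ℕ → Set L := fun m => {w | ‖polyIter φ m w - x₀‖ ≤ R'} with hTTdef
  have hTsucc : ∀ m, TT (m+1) ⊆ TT m := by
    intro m w hw
    simp only [hTTdef, Set.mem_setOf_eq] at hw ⊢
    by_contra hcon
    push_neg at hcon
    have h2 := hesc _ hcon
    rw [← polyIter_succ] at h2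
    have : R' < ‖polyIter φ (m+1) w - x₀‖ := by linarith
    linarith
  have hTanti : Antitone TT := antitone_nat_of_succ_le hTsucc
  have hTF : ∀ w : L, (∀ m, w ∈ TT m) → w ∈ F := by
    intro w hw htend
    obtain ⟨n, hn⟩ := (htend.eventually_ge_atTop (R' + ‖x₀‖ + 1)).exists
    have h1 : ‖polyIter φ n w‖ - ‖x₀‖ ≤ ‖polyIter φ n w - x₀‖ := norm_sub_norm_le _ _
    have h2 := hw n
    simp only [hTTdef, Set.mem_setOf_eq] at h2
    linarith
  -- key compactness step
  have hC10 : ∀ δ : ℝ, 0 < δ → ∃ m, ∀ z, z ∈ TT m → Metric.infDist z F ≤ δ := by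
    intro δ hδ
    by_contra hcon
    push_neg at hcon
    choose zz hz1 hz2 using hcon
    have hball : ∀ m, ∃ u ∈ F, ∀ w, dist w u ≤ δ → w ∈ TT m := by
      intro m
      have hz1' : ‖polyIter φ m (zz m) - x₀‖ ≤ R' := hz1 m
      obtain ⟨u, huF, hu⟩ := heart φ hd hfix hna R' δ m (zz m) hz1' (hz2 m)
      exact ⟨u, huF, fun w hw => hu w hw⟩
    choose uu huF hub using hball
    obtain ⟨ustar, hustarF, g, hg, hconv⟩ := hcompact.tendsto_subseq huF
    have hBF : Metric.closedBall ustar δ ⊆ F := by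
      intro w hw
      apply hTF
      intro m
      obtain ⟨N, hN⟩ := Metric.tendsto_atTop.mp hconv δ hδ
      have hj : dist (uu (g (max m N))) ustar < δ := by
        have := hN (max m N) (le_max_right _ _)
        simpa using this
      have hgj : m ≤ g (max m N) := le_trans (le_max_left m N) (hg.le_apply)
      refine hTanti hgj ?_
      apply hub (g (max m N))
      have hd1' : ‖w - uu (g (max m N))‖ ≤ max ‖w - ustar‖ ‖ustar - uu (g (max m N))‖ :=
        le_trans (le_of_eq (congrArg norm (by ring))) (hna _ _)
      rw [dist_eq_norm]
      refine le_trans hd1' (max_le ?_ ?_)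
      · rw [Metric.mem_closedBall, dist_eq_norm] at hw; exact hw
      · rw [← dist_eq_norm, dist_comm]
        exact le_of_lt hj
    exact ball_not_in_compact hna hx hcompact hδ hBF
  -- final assembly
  intro δ hδ ε hε
  obtain ⟨m, hm⟩ := hC10 δ hδ
  have hdR : (2:ℝ) ≤ (φ.natDegree:ℝ) := by exact_mod_cast hd
  have hdpos : (0:ℝ) < (φ.natDegree:ℝ) := by linarith
  set c : ℝ := ((φ.natDegree:ℝ)⁻¹)^m with hcdef
  have hcpos : 0 < c := pow_pos (inv_pos.mpr hdpos) m
  have hfar_height : ∀ z : L, δ < Metric.infDist z F → c ≤ canonicalLocalHeight φ z := by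
    intro z hz
    have hzT : z ∉ TT m := fun h => absurd (hm z h) (not_le.mpr hz)
    have hbig : R' < ‖polyIter φ m z - x₀‖ := by
      by_contra h
      push_neg at h
      exact hzT h
    have hnv : ‖polyIter φ m z‖ = ‖polyIter φ m z - x₀‖ := hnormeq _ hbig
    have hlp : Cst + 1 ≤ logPlus ‖polyIter φ m z‖ := by
      have hexp : Real.exp (Cst+1) ≤ ‖polyIter φ m z‖ := by
        have h0 := Real.exp_pos (Cst+1)
        rw [hnv]
        linarith
      have h1 : Real.exp (Cst+1) ≤ max ‖polyIter φ m z‖ 1 :=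
        le_trans hexp (le_max_left _ _)
      calc Cst + 1 = Real.log (Real.exp (Cst+1)) := (Real.log_exp _).symm
        _ ≤ Real.log (max ‖polyIter φ m z‖ 1) := Real.log_le_log (Real.exp_pos _) h1
        _ = logPlus ‖polyIter φ m z‖ := rfl
    have hge := height_ge hd hC0 hC z m
    have hid : ((φ.natDegree:ℝ)^m)⁻¹ = c := by rw [hcdef, ← inv_pow]
    have huseq : c * (Cst+1) ≤ useq φ z m := by
      have h' : ((φ.natDegree:ℝ)^m)⁻¹ * (Cst+1) ≤ useq φ z m := by
        unfold useq
        exact mul_le_mul_of_nonneg_left hlp (by positivity)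
      rwa [hid] at h'
    have hfin : c * (Cst+1) - Cst * c ≤ canonicalLocalHeight φ z := by linarith
    calc c = c*(Cst+1) - Cst*c := by ring
      _ ≤ _ := hfin
  have hev : ∀ᶠ n in atTop,
      ((S n).card : ℝ)⁻¹ * ∑ z ∈ S n, canonicalLocalHeight φ z < c * ε :=
    htaut.eventually_lt_const (by positivity)
  obtain ⟨N, hN⟩ := eventually_atTop.mp hev
  refine ⟨N, fun n hn => ?_⟩
  set K := S n with hKdef
  set Bf := K.filter (fun z => Metric.infDist z F ≤ δ) with hBfdef
  have hset : ((K : Set L)) ∩ {z : L | Metric.infDist z F ≤ δ} = (Bf : Set L) := by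
    ext w
    simp only [Set.mem_inter_iff, Finset.coe_filter, Set.mem_setOf_eq, Finset.mem_coe, hBfdef]
  rw [hset, Set.ncard_coe_finset]
  -- sum bound
  have hcards : Bf.card + (K.filter (fun z => ¬ Metric.infDist z F ≤ δ)).card = K.card := by
    rw [hBfdef]
    exact Finset.card_filter_add_card_filter_not _
  have hsum : c * ((K.card : ℝ) - Bf.card) ≤ ∑ z ∈ K, canonicalLocalHeight φ z := by
    have hsplit := Finset.sum_filter_add_sum_filter_not K
      (fun z => Metric.infDist z F ≤ δ) (fun z => canonicalLocalHeight φ z)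
    have h1 : 0 ≤ ∑ z ∈ Bf, canonicalLocalHeight φ z :=
      Finset.sum_nonneg fun z _ => height_nonneg hd hC0 hC z
    have h2 : ∀ z ∈ K.filter (fun z => ¬ Metric.infDist z F ≤ δ),
        c ≤ canonicalLocalHeight φ z := by
      intro z hz
      rw [Finset.mem_filter] at hz
      exact hfar_height z (not_le.mp hz.2)
    have h3 := Finset.card_nsmul_le_sum
      (K.filter (fun z => ¬ Metric.infDist z F ≤ δ)) (fun z => canonicalLocalHeight φ z) c h2
    rw [nsmul_eq_mul] at h3
    have hcc : ((K.filter (fun z => ¬ Metric.infDist z F ≤ δ)).card : ℝ)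
        = (K.card : ℝ) - Bf.card := by
      have := hcards
      have : (Bf.card : ℝ) + ((K.filter (fun z => ¬ Metric.infDist z F ≤ δ)).card : ℝ)
          = (K.card : ℝ) := by exact_mod_cast this
      linarith
    rw [hcc] at h3
    calc c * ((K.card : ℝ) - Bf.card)
        = ((K.card : ℝ) - Bf.card) * c := by ring
      _ ≤ ∑ z ∈ K.filter (fun z => ¬ Metric.infDist z F ≤ δ), canonicalLocalHeight φ z := h3
      _ ≤ ∑ z ∈ Bf, canonicalLocalHeight φ z
          + ∑ z ∈ K.filter (fun z => ¬ Metric.infDist z F ≤ δ), canonicalLocalHeight φ z := by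
          linarith
      _ = ∑ z ∈ K, canonicalLocalHeight φ z := hsplit
  rcases Nat.eq_zero_or_pos K.card with h0 | hpos
  · rw [h0]
    simp only [Nat.cast_zero, mul_zero]
    exact_mod_cast Nat.zero_le _
  · have hNn := hN n hn
    have hKpos : (0:ℝ) < K.card := by exact_mod_cast hpos
    have hsum2 : ∑ z ∈ K, canonicalLocalHeight φ z < c * ε * K.card := by
      calc ∑ z ∈ K, canonicalLocalHeight φ z
          = (K.card : ℝ) * (((K.card : ℝ))⁻¹ * ∑ z ∈ K, canonicalLocalHeight φ z) := by
            field_simp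
        _ < (K.card : ℝ) * (c * ε) := mul_lt_mul_of_pos_left hNn hKpos
        _ = c * ε * K.card := by ring
    have hcomb : c * ((K.card:ℝ) - Bf.card) < c * (ε * (K.card:ℝ)) := by
      calc c * ((K.card:ℝ) - Bf.card) ≤ ∑ z ∈ K, canonicalLocalHeight φ z := hsum
        _ < c * ε * K.card := hsum2
        _ = c * (ε * (K.card:ℝ)) := by ring
    have hlt : (K.card:ℝ) - Bf.card < ε * (K.card:ℝ) := (mul_lt_mul_iff_right₀ hcpos).mp hcomb
    linarith
end
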